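/- Completeness of polarized subtyping for call-by-value: for call-by-value type names t, u and their Levy translations [t]_V, [u]_V into positive CBPV type names, (1) if t empty (CBV emptiness) then [t]_V empty (CBPV emptiness), and (2) if t ≤ u (CBV subtyping) then [t]_V ≤ [u]_V (CBPV positive subtyping). -/

import Mathlib

namespace CBPV

abbrev Label := String
abbrev Var := String

-- Positive types (values); `name` refers to an equirecursively defined type name.
mutual
inductive PosTp : Type where
  | name : String → PosTp
  | str  : PosStr → PosTp

/-- Structural positive types. -/
inductive PosStr : Type where
  | tensor : PosTp → PosTp → PosStr
  | one    : PosStr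
  | plus   : List (Label × PosTp) → PosStr
  | down   : NegTp → PosStr

/-- Negative types (computations). -/
inductive NegTp : Type where
  | name : String → NegTp
  | str  : NegStr → NegTp

/-- Structural negative types. -/
inductive NegStr : Type where
  | arrow   : PosTp → NegTp → NegStr
  | withRec : List (Label × NegTp) → NegStr
  | up      : PosTp → NegStr
end

mutual
/-- Values. -/
inductive Val : Type where
  | var   : Var → Val
  | pair  : Val → Val → Val
  | unit  : Val
  | inj   : Label → Val → Val
  | thunk : Comp → Val

/-- Computations. -/
inductive Comp : Type where
  | lam       : Var → Comp → Comp
  | app       : Comp → Val → Comp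
  | record    : List (Label × Comp) → Comp
  | proj      : Comp → Label → Comp
  | ret       : Val → Comp
  | letret    : Var → Comp → Comp → Comp
  | name      : String → Comp
  | matchPair : Val → Var → Var → Comp → Comp
  | matchUnit : Val → Comp → Comp
  | matchSum  : Val → List (Label × Var × Comp) → Comp
  | force     : Val → Comp
end

/-- A global signature: equirecursive (contractive) type definitions `t = τ⁺`,
`s = σ⁻`, and recursive expression definitions `f : σ⁻ = e`. -/
structure Signature : Type where
  pos  : String → PosStr
  neg  : String → NegStr
  defs : String → NegTp × Comp

mutual
/-- Substitution of value `w` for variable `x` in a value. -/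
def substV (w : Val) (x : Var) : Val → Val
  | .var y => if y = x then w else .var y
  | .pair v₁ v₂ => .pair (substV w x v₁) (substV w x v₂)
  | .unit => .unit
  | .inj j v => .inj j (substV w x v)
  | .thunk e => .thunk (substC w x e)

/-- Substitution of value `w` for variable `x` in a computation. -/
def substC (w : Val) (x : Var) : Comp → Comp
  | .lam y e => .lam y (if y = x then e else substC w x e)
  | .app e v => .app (substC w x e) (substV w x v)
  | .record L => .record (substRec w x L)
  | .proj e j => .proj (substC w x e) j
  | .ret v => .ret (substV w x v)
  | .letret y e₁ e₂ => .letret y (substC w x e₁) (if y = x then e₂ else substC w x e₂)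
  | .name f => .name f
  | .matchPair v y z e =>
      .matchPair (substV w x v) y z (if y = x ∨ z = x then e else substC w x e)
  | .matchUnit v e => .matchUnit (substV w x v) (substC w x e)
  | .matchSum v B => .matchSum (substV w x v) (substBr w x B)
  | .force v => .force (substV w x v)

def substRec (w : Val) (x : Var) : List (Label × Comp) → List (Label × Comp)
  | [] => []
  | (l, e) :: rest => (l, substC w x e) :: substRec w x rest

def substBr (w : Val) (x : Var) : List (Label × Var × Comp) → List (Label × Var × Comp)
  | [] => []
  | (l, y, e) :: rest =>
      (l, y, if y = x then e else substC w x e) :: substBr w x rest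
end

/-- Terminal computations. -/
inductive Terminal : Comp → Prop where
  | lam    : Terminal (.lam x e)
  | record : Terminal (.record L)
  | ret    : Terminal (.ret v)

/-- Small-step dynamics of call-by-push-value, relative to a signature. -/
inductive Step (Sg : Signature) : Comp → Comp → Prop where
  | beta       : Step Sg (.app (.lam x e) v) (substC v x e)
  | app        : Step Sg e e' → Step Sg (.app e v) (.app e' v)
  | letretBeta : Step Sg (.letret x (.ret v) e₂) (substC v x e₂)
  | letretStep : Step Sg e₁ e₁' → Step Sg (.letret x e₁ e₂) (.letret x e₁' e₂)
  | projBeta   : L.lookup j = some e → Step Sg (.proj (.record L) j) e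
  | projStep   : Step Sg e e' → Step Sg (.proj e j) (.proj e' j)
  | matchPair  : Step Sg (.matchPair (.pair v₁ v₂) x y e) (substC v₁ x (substC v₂ y e))
  | matchUnit  : Step Sg (.matchUnit .unit e) e
  | matchSum   : B.lookup j = some (x, ej) → Step Sg (.matchSum (.inj j v) B) (substC v x ej)
  | force      : Step Sg (.force (.thunk e)) e
  | name       : Sg.defs f = (σ, e) → Step Sg (.name f) e

end CBPV

namespace CBPV

def PosTp.IsName : PosTp → Prop := fun τ => ∃ t, τ = .name t
def NegTp.IsName : NegTp → Prop := fun σ => ∃ s, σ = .name s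

/-- A structural positive type is in normal form if all of its components are
type names, and its label lists have no duplicate labels. -/
def PosStrNormal : PosStr → Prop
  | .tensor τ₁ τ₂ => τ₁.IsName ∧ τ₂.IsName
  | .one => True
  | .plus L => (∀ p ∈ L, (Prod.snd p).IsName) ∧ (L.map Prod.fst).Nodup
  | .down σ => σ.IsName

def NegStrNormal : NegStr → Prop
  | .arrow τ σ => τ.IsName ∧ σ.IsName
  | .withRec L => (∀ p ∈ L, (Prod.snd p).IsName) ∧ (L.map Prod.fst).Nodup
  | .up τ => τ.IsName

/-- A signature is in normal form when every type definition alternates between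
type names and structural types, i.e. the components of every defined
structural type are themselves type names. -/
def SigNormal (Sg : Signature) : Prop :=
  (∀ t, PosStrNormal (Sg.pos t)) ∧ (∀ s, NegStrNormal (Sg.neg s))

/-- One unfolding of the rules for the emptiness judgment `t empty`. -/
def EmptyUnf (Sg : Signature) (S : String → Prop) (t : String) : Prop :=
  (∃ L, Sg.pos t = .plus L ∧
     ∀ p ∈ L, ∃ tj, Prod.snd p = PosTp.name tj ∧ S tj) ∨
  (∃ t₁ t₂, Sg.pos t = .tensor (.name t₁) (.name t₂) ∧ (S t₁ ∨ S t₂))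

/-- `t empty`: the greatest fixed point (circular derivations) of the
emptiness rules. -/
def TpEmpty (Sg : Signature) (t : String) : Prop :=
  ∃ S : String → Prop, (∀ u, S u → EmptyUnf Sg S u) ∧ S t

/-- `s full`: `s = t₁ → s₂ ∈ Σ` with `t₁ empty`, or `s = &{} ∈ Σ`. -/
def TpFull (Sg : Signature) (s : String) : Prop :=
  (∃ t₁ s₂, Sg.neg s = .arrow (.name t₁) (.name s₂) ∧ TpEmpty Sg t₁) ∨
  Sg.neg s = .withRec []

/-- One unfolding of the rules for positive subtyping `t ≤ u` between
positive type names. -/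
def PosSubUnf (Sg : Signature) (P N : String → String → Prop) (t u : String) : Prop :=
  (∃ t₁ t₂ u₁ u₂, Sg.pos t = .tensor (.name t₁) (.name t₂) ∧
     Sg.pos u = .tensor (.name u₁) (.name u₂) ∧ P t₁ u₁ ∧ P t₂ u₂) ∨
  (Sg.pos t = .one ∧ Sg.pos u = .one) ∨
  (∃ L K, Sg.pos t = .plus L ∧ Sg.pos u = .plus K ∧
     ∀ p ∈ L, ∃ tj, Prod.snd p = PosTp.name tj ∧
       (TpEmpty Sg tj ∨ ∃ uj, K.lookup (Prod.fst p) = some (PosTp.name uj) ∧ P tj uj)) ∨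
  (∃ s r, Sg.pos t = .down (.name s) ∧ Sg.pos u = .down (.name r) ∧ N s r) ∨
  TpEmpty Sg t

/-- One unfolding of the rules for negative subtyping `s ≤ r` between
negative type names. -/
def NegSubUnf (Sg : Signature) (P N : String → String → Prop) (s r : String) : Prop :=
  (∃ t₁ s₂ u₁ r₂, Sg.neg s = .arrow (.name t₁) (.name s₂) ∧
     Sg.neg r = .arrow (.name u₁) (.name r₂) ∧ P u₁ t₁ ∧ N s₂ r₂) ∨
  (∃ t u, Sg.neg s = .up (.name t) ∧ Sg.neg r = .up (.name u) ∧ P t u) ∨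
  (∃ L K, Sg.neg s = .withRec L ∧ Sg.neg r = .withRec K ∧
     ∀ p ∈ K, ∃ rj, Prod.snd p = NegTp.name rj ∧
       ∃ sj, L.lookup (Prod.fst p) = some (NegTp.name sj) ∧ N sj rj) ∨
  (∃ t, Sg.neg s = .up (.name t) ∧ TpEmpty Sg t) ∨
  TpFull Sg r

/-- `t ≤ u`: syntactic subtyping between positive type names, interpreted as
circular derivations (greatest fixed point of the subtyping rules). -/
def PosSub (Sg : Signature) (t u : String) : Prop :=
  ∃ P N : String → String → Prop,
    (∀ a b, P a b → PosSubUnf Sg P N a b) ∧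
    (∀ a b, N a b → NegSubUnf Sg P N a b) ∧ P t u

/-- `s ≤ r`: syntactic subtyping between negative type names, interpreted as
circular derivations (greatest fixed point of the subtyping rules). -/
def NegSub (Sg : Signature) (s r : String) : Prop :=
  ∃ P N : String → String → Prop,
    (∀ a b, P a b → PosSubUnf Sg P N a b) ∧
    (∀ a b, N a b → NegSubUnf Sg P N a b) ∧ N s r

end CBPV

namespace CBPV

/-- Structural source-language types (for call-by-name and call-by-value),
with type-name components: functions, eager pairs, unit, variant records and
lazy records. -/
inductive SrcTp : Type where
  | arrow   : String → String → SrcTp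
  | tensor  : String → String → SrcTp
  | one     : SrcTp
  | plus    : List (Label × String) → SrcTp
  | withRec : List (Label × String) → SrcTp

/-- A source-language signature of equirecursive type-name definitions. -/
structure SrcSig : Type where
  def_ : String → SrcTp

end CBPV

namespace CBPV

/-- One unfolding of the rules for call-by-value emptiness `t empty`. -/
def CBVEmptyUnf (S : SrcSig) (E : String → Prop) (t : String) : Prop :=
  (∃ t₁ t₂, S.def_ t = .tensor t₁ t₂ ∧ (E t₁ ∨ E t₂)) ∨
  (∃ L, S.def_ t = .plus L ∧ ∀ p ∈ L, E (Prod.snd p))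

/-- Call-by-value emptiness `t empty` (greatest fixed point of the rules). -/
def CBVEmpty (S : SrcSig) (t : String) : Prop :=
  ∃ E : String → Prop, (∀ a, E a → CBVEmptyUnf S E a) ∧ E t

/-- One unfolding of the rules for call-by-value subtyping `t ≤ u`. -/
def CBVUnf (S : SrcSig) (R : String → String → Prop) (t u : String) : Prop :=
  (∃ t₁ t₂ u₁ u₂, S.def_ t = .arrow t₁ t₂ ∧ S.def_ u = .arrow u₁ u₂ ∧
     R u₁ t₁ ∧ R t₂ u₂) ∨
  (∃ t₁ t₂ u₁ u₂, S.def_ t = .tensor t₁ t₂ ∧ S.def_ u = .tensor u₁ u₂ ∧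
     R t₁ u₁ ∧ R t₂ u₂) ∨
  (S.def_ t = .one ∧ S.def_ u = .one) ∨
  (∃ L J, S.def_ t = .plus L ∧ S.def_ u = .plus J ∧
     ∀ p ∈ L, (J.lookup (Prod.fst p) = none ∧ CBVEmpty S (Prod.snd p)) ∨
       (∃ uℓ, J.lookup (Prod.fst p) = some uℓ ∧ R (Prod.snd p) uℓ)) ∨
  (∃ L J, S.def_ t = .withRec L ∧ S.def_ u = .withRec J ∧
     ∀ p ∈ J, ∃ tj, L.lookup (Prod.fst p) = some tj ∧ R tj (Prod.snd p)) ∨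
  CBVEmpty S t ∨
  (∃ t₁ t₂ u₁ u₂, S.def_ t = .arrow t₁ t₂ ∧ S.def_ u = .arrow u₁ u₂ ∧
     CBVEmpty S u₁) ∨
  (∃ L u₁ u₂, S.def_ t = .withRec L ∧ S.def_ u = .arrow u₁ u₂ ∧
     CBVEmpty S u₁) ∨
  (∃ t₁ t₂, S.def_ t = .arrow t₁ t₂ ∧ S.def_ u = .withRec [])

/-- Call-by-value subtyping `t ≤ u`, interpreted as circular derivations
(greatest fixed point of the call-by-value subtyping rules). -/
def CBVSub (S : SrcSig) (t u : String) : Prop :=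
  ∃ R : String → String → Prop, (∀ a b, R a b → CBVUnf S R a b) ∧ R t u

/-- Levy's call-by-value translation of types, specified relationally:
`tr t` is the CBPV positive type name `[t]_V`, and the translated signature is
in normal form, with auxiliary type names inserted as needed:
`[τ→σ]_V = ↓([τ]_V → ↑[σ]_V)`, `[τ₁⊗τ₂]_V = [τ₁]_V ⊗ [τ₂]_V`, `[1]_V = 1`,
`[⊕{ℓ:τ_ℓ}]_V = ⊕{ℓ:[τ_ℓ]_V}`, and `[&{ℓ:σ_ℓ}]_V = ↓&{ℓ:↑[σ_ℓ]_V}`. -/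
def CBVTrans (S : SrcSig) (Sg : Signature) (tr : String → String) : Prop :=
  ∀ t : String,
    match S.def_ t with
    | .arrow t₁ t₂ => ∃ n m,
        Sg.pos (tr t) = .down (.name n) ∧
        Sg.neg n = .arrow (.name (tr t₁)) (.name m) ∧
        Sg.neg m = .up (.name (tr t₂))
    | .tensor t₁ t₂ =>
        Sg.pos (tr t) = .tensor (.name (tr t₁)) (.name (tr t₂))
    | .one => Sg.pos (tr t) = .one
    | .plus L =>
        Sg.pos (tr t) = .plus (L.map (fun p => (p.1, PosTp.name (tr p.2))))
    | .withRec L => ∃ (n : String) (M : Label × String → String),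
        Sg.pos (tr t) = .down (.name n) ∧
        Sg.neg n = .withRec (L.map (fun p => (p.1, NegTp.name (M p)))) ∧
        ∀ p ∈ L, Sg.neg (M p) = .up (.name (tr (Prod.snd p)))

end CBPV

/-!
The image under `[·]_V` of a CBV emptiness (resp. subtyping) post-fixed point is a CBPV one.
For subtyping, negative names only arise as the bodies of thunks `↓` and as shifts `↑`, and
each CBV rule becomes the matching CBPV rule: functions and lazy records pass through `↓`
into the `→`- and `&`-rules, whose components end in `↑[σ]_V`, while the rules for an empty
domain and for `τ → σ ≤ &{}` become fullness of the translated right-hand side.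
-/

namespace List

variable {α β γ : Type*} [BEq α] [LawfulBEq α]

theorem lookup_map_pair (f : α × β → γ) (l : List (α × β)) (k : α) :
    (l.map fun p => (p.1, f p)).lookup k = (l.lookup k).map fun b => f (k, b) := by
  induction l with
  | nil => rfl
  | cons p l ih =>
    obtain ⟨a, b⟩ := p
    by_cases h : k = a
    · subst h; simp
    · simp [lookup_cons, beq_false_of_ne h, ih]

theorem mem_of_lookup_eq_some {l : List (α × β)} {k : α} {b : β} (h : l.lookup k = some b) :
    (k, b) ∈ l := by
  obtain ⟨_, _, rfl, _⟩ := lookup_eq_some_iff.mp h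
  simp

end List

namespace CBPV

section Rules

variable {Sg : Signature} {P N : String → String → Prop}

theorem PosSubUnf.tensor {t u t₁ t₂ u₁ u₂ : String}
    (ht : Sg.pos t = .tensor (.name t₁) (.name t₂)) (hu : Sg.pos u = .tensor (.name u₁) (.name u₂))
    (h₁ : P t₁ u₁) (h₂ : P t₂ u₂) : PosSubUnf Sg P N t u :=
  Or.inl ⟨t₁, t₂, u₁, u₂, ht, hu, h₁, h₂⟩

theorem PosSubUnf.one {t u : String} (ht : Sg.pos t = .one) (hu : Sg.pos u = .one) :
    PosSubUnf Sg P N t u :=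
  Or.inr <| Or.inl ⟨ht, hu⟩

theorem PosSubUnf.plus {t u : String} {L K : List (Label × PosTp)}
    (ht : Sg.pos t = .plus L) (hu : Sg.pos u = .plus K)
    (h : ∀ p ∈ L, ∃ tj, p.2 = PosTp.name tj ∧
      (TpEmpty Sg tj ∨ ∃ uj, K.lookup p.1 = some (PosTp.name uj) ∧ P tj uj)) :
    PosSubUnf Sg P N t u :=
  Or.inr <| Or.inr <| Or.inl ⟨L, K, ht, hu, h⟩

theorem PosSubUnf.down {t u s r : String} (ht : Sg.pos t = .down (.name s))
    (hu : Sg.pos u = .down (.name r)) (h : N s r) : PosSubUnf Sg P N t u :=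
  Or.inr <| Or.inr <| Or.inr <| Or.inl ⟨s, r, ht, hu, h⟩

theorem PosSubUnf.empty {t u : String} (ht : TpEmpty Sg t) : PosSubUnf Sg P N t u :=
  Or.inr <| Or.inr <| Or.inr <| Or.inr ht

theorem NegSubUnf.arrow {s r t₁ s₂ u₁ r₂ : String}
    (hs : Sg.neg s = .arrow (.name t₁) (.name s₂)) (hr : Sg.neg r = .arrow (.name u₁) (.name r₂))
    (h₁ : P u₁ t₁) (h₂ : N s₂ r₂) : NegSubUnf Sg P N s r :=
  Or.inl ⟨t₁, s₂, u₁, r₂, hs, hr, h₁, h₂⟩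

theorem NegSubUnf.withRec {s r : String} {L K : List (Label × NegTp)}
    (hs : Sg.neg s = .withRec L) (hr : Sg.neg r = .withRec K)
    (h : ∀ p ∈ K, ∃ rj, p.2 = NegTp.name rj ∧
      ∃ sj, L.lookup p.1 = some (NegTp.name sj) ∧ N sj rj) :
    NegSubUnf Sg P N s r :=
  Or.inr <| Or.inr <| Or.inl ⟨L, K, hs, hr, h⟩

theorem NegSubUnf.full {s r : String} (hr : TpFull Sg r) : NegSubUnf Sg P N s r :=
  Or.inr <| Or.inr <| Or.inr <| Or.inr hr

theorem NegSubUnf.mono {N' : String → String → Prop} (hN : ∀ s r, N s r → N' s r) {s r : String}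
    (h : NegSubUnf Sg P N s r) : NegSubUnf Sg P N' s r := by
  rcases h with ⟨t₁, s₂, u₁, r₂, hs, hr, h₁, h₂⟩ | h | ⟨L, K, hs, hr, hK⟩ | h | h
  · exact .arrow hs hr h₁ (hN _ _ h₂)
  · exact Or.inr <| Or.inl h
  · refine .withRec hs hr fun p hp => ?_
    obtain ⟨rj, hrj, sj, hsj, h⟩ := hK p hp
    exact ⟨rj, hrj, sj, hsj, hN _ _ h⟩
  · exact Or.inr <| Or.inr <| Or.inr <| Or.inl h
  · exact .full h

def UpRel (Sg : Signature) (P : String → String → Prop) (s r : String) : Prop :=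
  ∃ t u, Sg.neg s = .up (.name t) ∧ Sg.neg r = .up (.name u) ∧ P t u

theorem NegSubUnf.of_upRel {s r : String} (h : UpRel Sg P s r) : NegSubUnf Sg P N s r :=
  Or.inr <| Or.inl h

/-- Negative names need only be related by one round of negative rules ending in shifts `↑`:
those pairs unfold back into `P`. -/
theorem posSub_of_forall_posSubUnf
    (hP : ∀ t u, P t u → PosSubUnf Sg P (NegSubUnf Sg P (UpRel Sg P)) t u) {t u : String}
    (h : P t u) : PosSub Sg t u :=
  ⟨P, NegSubUnf Sg P (UpRel Sg P), hP, fun _ _ hN => hN.mono fun _ _ => .of_upRel, h⟩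

end Rules

section Translation

variable {S : SrcSig} {Sg : Signature} {tr : String → String}

theorem CBVTrans.pos_arrow (htr : CBVTrans S Sg tr) {t t₁ t₂ : String}
    (h : S.def_ t = .arrow t₁ t₂) :
    ∃ n m, Sg.pos (tr t) = .down (.name n) ∧ Sg.neg n = .arrow (.name (tr t₁)) (.name m) ∧
      Sg.neg m = .up (.name (tr t₂)) := by
  simpa [h] using htr t

theorem CBVTrans.pos_tensor (htr : CBVTrans S Sg tr) {t t₁ t₂ : String}
    (h : S.def_ t = .tensor t₁ t₂) : Sg.pos (tr t) = .tensor (.name (tr t₁)) (.name (tr t₂)) := by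
  simpa [h] using htr t

theorem CBVTrans.pos_one (htr : CBVTrans S Sg tr) {t : String} (h : S.def_ t = .one) :
    Sg.pos (tr t) = .one := by
  simpa [h] using htr t

theorem CBVTrans.pos_plus (htr : CBVTrans S Sg tr) {t : String} {L : List (Label × String)}
    (h : S.def_ t = .plus L) :
    Sg.pos (tr t) = .plus (L.map fun p => (p.1, PosTp.name (tr p.2))) := by
  simpa [h] using htr t

theorem CBVTrans.pos_withRec (htr : CBVTrans S Sg tr) {t : String} {L : List (Label × String)}
    (h : S.def_ t = .withRec L) :
    ∃ (n : String) (M : Label × String → String), Sg.pos (tr t) = .down (.name n) ∧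
      Sg.neg n = .withRec (L.map fun p => (p.1, NegTp.name (M p))) ∧
      ∀ p ∈ L, Sg.neg (M p) = .up (.name (tr p.2)) := by
  simpa [h] using htr t

theorem emptyUnf_of_cbvEmptyUnf (htr : CBVTrans S Sg tr) {E : String → Prop} {t : String}
    (h : CBVEmptyUnf S E t) : EmptyUnf Sg (fun x => ∃ a, E a ∧ tr a = x) (tr t) := by
  rcases h with ⟨t₁, t₂, ht, hE⟩ | ⟨L, ht, hE⟩
  · exact Or.inr ⟨tr t₁, tr t₂, htr.pos_tensor ht, hE.imp (⟨t₁, ·, rfl⟩) (⟨t₂, ·, rfl⟩)⟩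
  · refine Or.inl ⟨_, htr.pos_plus ht, ?_⟩
    simp only [List.forall_mem_map]
    exact fun p hp => ⟨tr p.2, rfl, p.2, hE p hp, rfl⟩

theorem tpEmpty_of_cbvEmpty (htr : CBVTrans S Sg tr) {t : String} (h : CBVEmpty S t) :
    TpEmpty Sg (tr t) := by
  obtain ⟨E, hE, ht⟩ := h
  refine ⟨fun x => ∃ a, E a ∧ tr a = x, ?_, t, ht, rfl⟩
  rintro _ ⟨a, ha, rfl⟩
  exact emptyUnf_of_cbvEmptyUnf htr (hE a ha)

variable {R : String → String → Prop}

theorem posSubUnf_of_plus (htr : CBVTrans S Sg tr) {N : String → String → Prop}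
    {t u : String} {L J : List (Label × String)} (ht : S.def_ t = .plus L) (hu : S.def_ u = .plus J)
    (h : ∀ p ∈ L, (J.lookup p.1 = none ∧ CBVEmpty S p.2) ∨
      ∃ uℓ, J.lookup p.1 = some uℓ ∧ R p.2 uℓ) :
    PosSubUnf Sg (Relation.Map R tr tr) N (tr t) (tr u) := by
  refine .plus (htr.pos_plus ht) (htr.pos_plus hu) ?_
  simp only [List.forall_mem_map]
  intro p hp
  refine ⟨tr p.2, rfl, ?_⟩
  rcases h p hp with ⟨-, hempty⟩ | ⟨uℓ, hlookup, hR⟩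
  · exact Or.inl (tpEmpty_of_cbvEmpty htr hempty)
  · refine Or.inr ⟨tr uℓ, ?_, p.2, uℓ, hR, rfl, rfl⟩
    simp [List.lookup_map_pair, hlookup]

theorem posSubUnf_of_withRec (htr : CBVTrans S Sg tr) {t u : String}
    {L J : List (Label × String)} (ht : S.def_ t = .withRec L) (hu : S.def_ u = .withRec J)
    (h : ∀ p ∈ J, ∃ tj, L.lookup p.1 = some tj ∧ R tj p.2) :
    PosSubUnf Sg (Relation.Map R tr tr)
      (NegSubUnf Sg (Relation.Map R tr tr) (UpRel Sg (Relation.Map R tr tr))) (tr t) (tr u) := by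
  obtain ⟨n, M, htn, hn, hM⟩ := htr.pos_withRec ht
  obtain ⟨m, M', hum, hm, hM'⟩ := htr.pos_withRec hu
  refine .down htn hum (.withRec hn hm ?_)
  simp only [List.forall_mem_map]
  intro p hp
  obtain ⟨tj, hlookup, hR⟩ := h p hp
  refine ⟨M' p, rfl, M (p.1, tj), by simp [List.lookup_map_pair, hlookup], ?_⟩
  exact ⟨tr tj, tr p.2, hM _ (List.mem_of_lookup_eq_some hlookup), hM' p hp,
    tj, p.2, hR, rfl, rfl⟩

theorem posSubUnf_of_cbvUnf (htr : CBVTrans S Sg tr) {t u : String} (h : CBVUnf S R t u) :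
    PosSubUnf Sg (Relation.Map R tr tr)
      (NegSubUnf Sg (Relation.Map R tr tr) (UpRel Sg (Relation.Map R tr tr))) (tr t) (tr u) := by
  rcases h with ⟨t₁, t₂, u₁, u₂, ht, hu, h₁, h₂⟩ | ⟨t₁, t₂, u₁, u₂, ht, hu, h₁, h₂⟩ | ⟨ht, hu⟩ |
    ⟨L, J, ht, hu, hL⟩ | ⟨L, J, ht, hu, hJ⟩ | hempty | ⟨t₁, t₂, u₁, u₂, ht, hu, hempty⟩ |
    ⟨L, u₁, u₂, ht, hu, hempty⟩ | ⟨t₁, t₂, ht, hu⟩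
  · obtain ⟨n, n₂, htn, hn, hn₂⟩ := htr.pos_arrow ht
    obtain ⟨m, m₂, hum, hm, hm₂⟩ := htr.pos_arrow hu
    exact .down htn hum <|
      .arrow hn hm ⟨u₁, t₁, h₁, rfl, rfl⟩ ⟨_, _, hn₂, hm₂, t₂, u₂, h₂, rfl, rfl⟩
  · exact .tensor (htr.pos_tensor ht) (htr.pos_tensor hu) ⟨t₁, u₁, h₁, rfl, rfl⟩
      ⟨t₂, u₂, h₂, rfl, rfl⟩
  · exact .one (htr.pos_one ht) (htr.pos_one hu)
  · exact posSubUnf_of_plus htr ht hu hL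
  · exact posSubUnf_of_withRec htr ht hu hJ
  · exact .empty (tpEmpty_of_cbvEmpty htr hempty)
  · obtain ⟨n, -, htn, -⟩ := htr.pos_arrow ht
    obtain ⟨m, m₂, hum, hm, -⟩ := htr.pos_arrow hu
    exact .down htn hum <| .full <| Or.inl ⟨_, m₂, hm, tpEmpty_of_cbvEmpty htr hempty⟩
  · obtain ⟨n, -, htn, -⟩ := htr.pos_withRec ht
    obtain ⟨m, m₂, hum, hm, -⟩ := htr.pos_arrow hu
    exact .down htn hum <| .full <| Or.inl ⟨_, m₂, hm, tpEmpty_of_cbvEmpty htr hempty⟩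
  · obtain ⟨n, -, htn, -⟩ := htr.pos_arrow ht
    obtain ⟨m, _, hum, hm, -⟩ := htr.pos_withRec hu
    exact .down htn hum <| .full <| Or.inr (by simpa using hm)

theorem posSub_of_cbvSub (htr : CBVTrans S Sg tr) {t u : String} (h : CBVSub S t u) :
    PosSub Sg (tr t) (tr u) := by
  obtain ⟨R, hR, htu⟩ := h
  refine posSub_of_forall_posSubUnf (P := Relation.Map R tr tr) ?_ ⟨t, u, htu, rfl, rfl⟩
  rintro _ _ ⟨a, b, hab, rfl, rfl⟩
  exact posSubUnf_of_cbvUnf htr (hR a b hab)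

end Translation

/-- Completeness of polarized subtyping for call-by-value: for call-by-value
type names `t`, `u` and their Levy translations `[t]_V`, `[u]_V` into positive
CBPV type names,
(1) if `t empty` (CBV emptiness) then `[t]_V empty` (CBPV emptiness), and
(2) if `t ≤ u` (CBV subtyping) then `[t]_V ≤ [u]_V` (CBPV positive subtyping). -/
theorem cbv_subtyping_complete (S : SrcSig) (Sg : Signature)
    (tr : String → String) (htr : CBVTrans S Sg tr) :
    (∀ t : String, CBVEmpty S t → TpEmpty Sg (tr t)) ∧
    (∀ t u : String, CBVSub S t u → PosSub Sg (tr t) (tr u)) :=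
  ⟨fun _ => tpEmpty_of_cbvEmpty htr, fun _ _ => posSub_of_cbvSub htr⟩

end CBPV
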